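/- arXiv:1712.07371 — 5 statements merged into one kernel-verified Lean document; each statement's English description precedes it below -/
import Mathlib

section
/- Let (a_k)_{k≥1} be complex numbers with sup_{k≥1} |a_k| ≤ M for some finite M, and let (c_k)_{k≥0} be defined from (a_k) by the MA recursion. Then for every complex number z with |z| < 1, the series Σ_{k≥1} a_k z^k and Σ_{k≥0} c_k z^k converge absolutely and Σ_{k≥0} c_k z^k = exp(Σ_{k≥1} a_k z^k). -/
/-!
Since the coefficients are bounded, `A z = ∑ a (k+1) z^(k+1)` is holomorphic on the unit disc,
hence so is `F = exp ∘ A`, and by Cauchy's estimates the Taylor series of `F` at `0` converges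
absolutely to `F` on the whole disc. Comparing Taylor coefficients on both sides of `F' = F A'`
(Leibniz rule) shows that the Taylor coefficients of `F` solve the MA recursion, whose solution is
unique; so they are the `c k`.
-/

open Filter Topology

/-- The MA recursion: `c 0 = 1` and
`c (k+1) = ∑_{j=0}^{k} (1 - j/(k+1)) * a (k+1-j) * c j`. -/
def IsMARec (a c : ℕ → ℂ) : Prop :=
  c 0 = 1 ∧
    ∀ k : ℕ, c (k + 1) =
      ∑ j ∈ Finset.range (k + 1), (1 - (j : ℂ) / ((k : ℂ) + 1)) * a (k + 1 - j) * c j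

open FormalMultilinearSeries
open scoped Nat NNReal ENNReal

section TaylorCoeff

variable {𝕜 : Type*} [NontriviallyNormedField 𝕜]

noncomputable def taylorCoeff (f : 𝕜 → 𝕜) (x : 𝕜) (n : ℕ) : 𝕜 := iteratedDeriv n f x / n !

@[simp]
lemma taylorCoeff_zero (f : 𝕜 → 𝕜) (x : 𝕜) : taylorCoeff f x 0 = f x := by
  simp [taylorCoeff]

lemma taylorCoeff_deriv [CharZero 𝕜] (f : 𝕜 → 𝕜) (x : 𝕜) (n : ℕ) :
    taylorCoeff (deriv f) x n = (n + 1) * taylorCoeff f x (n + 1) := by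
  simp only [taylorCoeff, ← iteratedDeriv_succ', Nat.factorial_succ, Nat.cast_mul, Nat.cast_add,
    Nat.cast_one]
  field_simp

lemma taylorCoeff_mul [CharZero 𝕜] {f g : 𝕜 → 𝕜} {x : 𝕜} {n : ℕ} (hf : ContDiffAt 𝕜 n f x)
    (hg : ContDiffAt 𝕜 n g x) :
    taylorCoeff (f * g) x n =
      ∑ i ∈ Finset.range (n + 1), taylorCoeff f x i * taylorCoeff g x (n - i) := by
  simp only [taylorCoeff, iteratedDeriv_mul hf hg, Finset.sum_div]
  refine Finset.sum_congr rfl fun i hi ↦ ?_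
  have := n.factorial_ne_zero
  have := i.factorial_ne_zero
  have := (n - i).factorial_ne_zero
  rw [Nat.cast_choose 𝕜 (Finset.mem_range_succ_iff.mp hi)]
  field_simp

lemma AnalyticAt.hasFPowerSeriesAt_taylorCoeff [CompleteSpace 𝕜] [CharZero 𝕜] {f : 𝕜 → 𝕜}
    {x : 𝕜} (hf : AnalyticAt 𝕜 f x) : HasFPowerSeriesAt f (ofScalars 𝕜 (taylorCoeff f x)) x :=
  hf.hasFPowerSeriesAt

lemma HasFPowerSeriesAt.taylorCoeff_eq [CompleteSpace 𝕜] [CharZero 𝕜] {f : 𝕜 → 𝕜} {x : 𝕜}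
    {α : ℕ → 𝕜} (hf : HasFPowerSeriesAt f (ofScalars 𝕜 α) x) : taylorCoeff f x = α :=
  (ofScalars_series_eq_iff 𝕜 _ _).mp <|
    hf.analyticAt.hasFPowerSeriesAt_taylorCoeff.eq_formalMultilinearSeries hf

end TaylorCoeff

lemma summable_norm_mul_pow_of_norm_le {𝕜 : Type*} [NormedField 𝕜] {α : ℕ → 𝕜} {M : ℝ}
    (hα : ∀ n, ‖α n‖ ≤ M) {z : 𝕜} (hz : ‖z‖ < 1) : Summable fun n ↦ ‖α n * z ^ n‖ := by
  refine .of_nonneg_of_le (fun _ ↦ norm_nonneg _) (fun n ↦ ?_)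
    ((summable_geometric_of_lt_one (norm_nonneg z) hz).mul_left M)
  rw [norm_mul, norm_pow]
  gcongr
  exact hα n

lemma hasFPowerSeriesOnBall_ofScalars_of_hasSum {α : ℕ → ℂ} {f : ℂ → ℂ} {r : ℝ≥0∞}
    (hr : 0 < r) (hf : ∀ z ∈ Metric.eball (0 : ℂ) r, HasSum (fun n ↦ α n * z ^ n) (f z)) :
    HasFPowerSeriesOnBall f (ofScalars ℂ α) 0 r where
  r_le := by
    refine ENNReal.le_of_forall_nnreal_lt fun ρ hρ ↦
      (ofScalars ℂ α).le_radius_of_tendsto (l := 0) ?_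
    have hρ' : (ρ : ℂ) ∈ Metric.eball (0 : ℂ) r := by simpa [enorm_eq_nnnorm] using hρ
    simpa [ofScalars_norm] using (hf _ hρ').summable.tendsto_atTop_zero.norm
  r_pos := hr
  hasSum {z} hz := by simpa [ofScalars_apply_eq, mul_comm] using hf z hz

lemma exists_hasFPowerSeriesOnBall_taylorCoeff {f : ℂ → ℂ} {r : ℝ≥0∞}
    (hf : DifferentiableOn ℂ f (Metric.eball 0 r)) {z : ℂ} (hz : z ∈ Metric.eball 0 r) :
    ∃ R : ℝ≥0, z ∈ Metric.eball 0 R ∧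
      HasFPowerSeriesOnBall f (ofScalars ℂ (taylorCoeff f 0)) 0 R := by
  obtain ⟨R, hzR, hRr⟩ := exists_between (Metric.mem_eball'.mp hz)
  lift R to ℝ≥0 using ne_top_of_lt hRr
  have hR : 0 < R := by exact_mod_cast pos_of_gt hzR
  have hball : Metric.closedBall (0 : ℂ) R ⊆ Metric.eball 0 r := by
    rw [← Metric.closedEBall_coe]
    exact fun w hw ↦ lt_of_le_of_lt hw hRr
  have hp := (hf.mono hball).hasFPowerSeriesOnBall hR
  refine ⟨R, Metric.mem_eball'.mpr hzR, ?_⟩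
  rwa [hp.hasFPowerSeriesAt.eq_formalMultilinearSeries
    hp.analyticAt.hasFPowerSeriesAt_taylorCoeff] at hp

namespace IsMARec

variable {a a' c c' : ℕ → ℂ}

lemma congr_left (hc : IsMARec a c) (h : ∀ k, 1 ≤ k → a k = a' k) : IsMARec a' c := by
  refine ⟨hc.1, fun k ↦ ?_⟩
  rw [hc.2 k]
  refine Finset.sum_congr rfl fun j hj ↦ ?_
  rw [h _ (by have := Finset.mem_range.mp hj; omega)]

lemma unique (hc : IsMARec a c) (hc' : IsMARec a c') : c = c' := by
  funext n
  induction n using Nat.strong_induction_on with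
  | _ n ih =>
    cases n with
    | zero => rw [hc.1, hc'.1]
    | succ k =>
      rw [hc.2 k, hc'.2 k]
      exact Finset.sum_congr rfl fun j hj ↦ by rw [ih j (Finset.mem_range.mp hj)]

end IsMARec

lemma succ_mul_taylorCoeff_cexp {A : ℂ → ℂ} (hA : AnalyticAt ℂ A 0) (k : ℕ) :
    (k + 1) * taylorCoeff (fun z ↦ Complex.exp (A z)) 0 (k + 1) =
      ∑ j ∈ Finset.range (k + 1), taylorCoeff (fun z ↦ Complex.exp (A z)) 0 j *
        (((k - j : ℕ) + 1) * taylorCoeff A 0 (k - j + 1)) := by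
  set F := fun z ↦ Complex.exp (A z)
  have hderiv : deriv F =ᶠ[𝓝 0] F * deriv A :=
    hA.eventually_analyticAt.mono fun z hz ↦ deriv_cexp hz.differentiableAt
  calc (k + 1) * taylorCoeff F 0 (k + 1)
      = taylorCoeff (deriv F) 0 k := (taylorCoeff_deriv F 0 k).symm
    _ = taylorCoeff (F * deriv A) 0 k := by simp only [taylorCoeff, hderiv.iteratedDeriv_eq]
    _ = _ := by
      rw [taylorCoeff_mul hA.cexp'.contDiffAt hA.deriv.contDiffAt]
      simp only [taylorCoeff_deriv, F]

lemma isMARec_taylorCoeff_cexp {A : ℂ → ℂ} (hA : AnalyticAt ℂ A 0) (h0 : A 0 = 0) :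
    IsMARec (taylorCoeff A 0) (taylorCoeff (fun z ↦ Complex.exp (A z)) 0) := by
  refine ⟨by simp [h0], fun k ↦ ?_⟩
  have hk : (k : ℂ) + 1 ≠ 0 := Nat.cast_add_one_ne_zero k
  rw [← mul_right_inj' hk, succ_mul_taylorCoeff_cexp hA, Finset.mul_sum]
  refine Finset.sum_congr rfl fun j hj ↦ ?_
  have hjk : j ≤ k := Finset.mem_range_succ_iff.mp hj
  rw [show k + 1 - j = k - j + 1 by omega, Nat.cast_sub hjk]
  field_simp
  ring

lemma summable_norm_mul_pow_succ {a : ℕ → ℂ} {M : ℝ} (hM : ∀ k, 1 ≤ k → ‖a k‖ ≤ M) {z : ℂ}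
    (hz : ‖z‖ < 1) : Summable fun k ↦ ‖a (k + 1) * z ^ (k + 1)‖ := by
  have h := summable_norm_mul_pow_of_norm_le (α := fun k ↦ a (k + 1)) (fun k ↦ hM _ k.succ_pos) hz
  simpa [pow_succ, mul_assoc] using h.mul_right ‖z‖

lemma hasFPowerSeriesOnBall_tsum_succ {a : ℕ → ℂ} {M : ℝ} (hM : ∀ k, 1 ≤ k → ‖a k‖ ≤ M) :
    HasFPowerSeriesOnBall (fun z ↦ ∑' k, a (k + 1) * z ^ (k + 1))
      (ofScalars ℂ fun n ↦ if n = 0 then 0 else a n) 0 1 := by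
  refine hasFPowerSeriesOnBall_ofScalars_of_hasSum one_pos fun z hz ↦ ?_
  have hz' : ‖z‖ < 1 := by rwa [← ENNReal.coe_one, Metric.eball_coe, mem_ball_zero_iff] at hz
  have hs := (summable_norm_mul_pow_succ hM hz').of_norm
  rw [← hasSum_nat_add_iff' 1]
  simpa using hs.hasSum

/-- If `sup_{k ≥ 1} ‖a k‖ ≤ M` and `(c k)` is obtained from `(a k)` by the MA recursion,
then for every `z` with `‖z‖ < 1` the series `∑_{k ≥ 1} a k * z ^ k` and `∑_{k ≥ 0} c k * z ^ k`
converge absolutely and `∑_{k ≥ 0} c k * z ^ k = exp (∑_{k ≥ 1} a k * z ^ k)`. -/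
theorem statement0 (a c : ℕ → ℂ) (M : ℝ)
    (hM : ∀ k : ℕ, 1 ≤ k → ‖a k‖ ≤ M)
    (hrec : IsMARec a c) :
    ∀ z : ℂ, ‖z‖ < 1 →
      Summable (fun k : ℕ => ‖a (k + 1) * z ^ (k + 1)‖) ∧
      Summable (fun k : ℕ => ‖c k * z ^ k‖) ∧
      ∑' k : ℕ, c k * z ^ k = Complex.exp (∑' k : ℕ, a (k + 1) * z ^ (k + 1)) := by
  intro z hz
  set A : ℂ → ℂ := fun w ↦ ∑' k, a (k + 1) * w ^ (k + 1)
  set F : ℂ → ℂ := fun w ↦ Complex.exp (A w)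
  have hA : HasFPowerSeriesOnBall A _ 0 1 := hasFPowerSeriesOnBall_tsum_succ hM
  have hc : c = taylorCoeff F 0 := by
    refine hrec.unique <| (isMARec_taylorCoeff_cexp hA.analyticAt (by simp [A])).congr_left
      fun k hk ↦ ?_
    rw [hA.hasFPowerSeriesAt.taylorCoeff_eq]
    exact if_neg (by omega)
  have hz1 : z ∈ Metric.eball (0 : ℂ) 1 := by
    rwa [← ENNReal.coe_one, Metric.eball_coe, mem_ball_zero_iff]
  obtain ⟨R, hzR, hF⟩ := exists_hasFPowerSeriesOnBall_taylorCoeff hA.differentiableOn.cexp hz1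
  refine ⟨summable_norm_mul_pow_succ hM hz, ?_, ?_⟩
  · have h := (ofScalars ℂ (taylorCoeff F 0)).summable_norm_apply
      (Metric.eball_subset_eball hF.r_le hzR)
    simp only [ofScalars_apply_eq, smul_eq_mul] at h
    simpa only [hc, mul_comm] using h
  · have h := (hF.hasSum hzR).tsum_eq
    simp only [ofScalars_apply_eq, smul_eq_mul, zero_add] at h
    simpa only [hc, mul_comm] using h
end

section
/- Let (a_k)_{k≥1} be complex numbers with sup_{k≥1} |a_k| ≤ M for some finite M, let (c_k)_{k≥0} be defined from (a_k) by the MA recursion, and let (b_k)_{k≥0} be defined from (a_k) by the AR recursion. Then for every complex number z with |z| < 1, the series Σ_{k≥0} (−b_k) z^k converges absolutely, equals exp(−Σ_{k≥1} a_k z^k), and satisfies (Σ_{k≥0} c_k z^k) · (Σ_{k≥0} (−b_k) z^k) = 1. -/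
/-!
With `A(z) = ∑_{k ≥ 1} a_k z^k`, multiplying the MA recursion by `k + 1` turns it into
`(k + 1) c_{k+1} = ∑_{i+j=k} (i + 1) a_{i+1} c_j`, the coefficient form of `f' = A' f`, `f(0) = 1`.
Since `g = exp ∘ A` is holomorphic on the unit disc and solves `g' = A' g`, Leibniz's rule shows
that its Taylor coefficients at `0` satisfy the same recursion, so they are the `c_k`, and the
Taylor series of `g` converges to `g` on the whole disc. Finally `-b` satisfies the MA recursion
for `-a`, which gives `∑ (-b_k) z^k = exp (-A z)`.
-/

open Filter Topology

/-- The AR recursion: `b 0 = -1` and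
`b (k+1) = -∑_{j=0}^{k} (1 - j/(k+1)) * a (k+1-j) * b j`. -/
def IsARRec (a b : ℕ → ℂ) : Prop :=
  b 0 = -1 ∧
    ∀ k : ℕ, b (k + 1) =
      -∑ j ∈ Finset.range (k + 1), (1 - (j : ℂ) / ((k : ℂ) + 1)) * a (k + 1 - j) * b j

open Finset Nat FormalMultilinearSeries

lemma isMARec_iff {a c : ℕ → ℂ} :
    IsMARec a c ↔ c 0 = 1 ∧
      ∀ k : ℕ, (k + 1 : ℂ) * c (k + 1) = ∑ i ∈ range (k + 1), (i + 1) * a (i + 1) * c (k - i) := by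
  have hsum (k : ℕ) :
      ∑ i ∈ range (k + 1), ((i : ℂ) + 1) * a (i + 1) * c (k - i) =
        (k + 1 : ℂ) * ∑ j ∈ range (k + 1), (1 - (j : ℂ) / ((k : ℂ) + 1)) * a (k + 1 - j) * c j := by
    rw [← sum_range_reflect, mul_sum]
    refine sum_congr rfl fun j hj => ?_
    have hjk : j ≤ k := Nat.lt_succ_iff.mp (mem_range.mp hj)
    rw [show k + 1 - 1 - j + 1 = k + 1 - j by omega, show k - (k + 1 - 1 - j) = j by omega,
      show k + 1 - 1 - j = k - j by omega, Nat.cast_sub hjk]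
    field_simp
    ring
  refine and_congr_right fun _ => forall_congr' fun k => ?_
  rw [hsum, mul_right_inj' (Nat.cast_add_one_ne_zero k)]

lemma IsMARec.unique_s1 {a c d : ℕ → ℂ} (hc : IsMARec a c) (hd : IsMARec a d) : c = d := by
  funext k
  induction k using Nat.strong_induction_on with
  | _ k ih =>
    cases k with
    | zero => rw [hc.1, hd.1]
    | succ k =>
      rw [hc.2, hd.2]
      exact sum_congr rfl fun j hj => by rw [ih j (by simp at hj; omega)]

lemma IsARRec.isMARec_neg {a b : ℕ → ℂ} (hb : IsARRec a b) : IsMARec (-a) (-b) := by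
  refine ⟨by simp [hb.1], fun k => ?_⟩
  simp only [Pi.neg_apply, hb.2 k, neg_neg, mul_neg, neg_mul]

section TaylorCoefficients

variable {𝕜 : Type*} [RCLike 𝕜] {f g : 𝕜 → 𝕜} {x : 𝕜}

lemma HasFPowerSeriesAt.iteratedDeriv_div_factorial {a : ℕ → 𝕜}
    (hf : HasFPowerSeriesAt f (ofScalars 𝕜 a) x) (n : ℕ) :
    iteratedDeriv n f x / n ! = a n :=
  congr_fun ((ofScalars_series_injective (𝕜 := 𝕜) (E := 𝕜)).eq_iff.mp
    (hf.analyticAt.hasFPowerSeriesAt.eq_formalMultilinearSeries hf)) n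

lemma iteratedDeriv_succ_div_factorial_of_deriv_eq_mul (hf : AnalyticAt 𝕜 f x)
    (hg : AnalyticAt 𝕜 g x) (hfg : deriv g =ᶠ[𝓝 x] deriv f * g) (n : ℕ) :
    (n + 1 : 𝕜) * (iteratedDeriv (n + 1) g x / (n + 1)!) =
      ∑ i ∈ range (n + 1), (i + 1) * (iteratedDeriv (i + 1) f x / (i + 1)!) *
        (iteratedDeriv (n - i) g x / (n - i)!) := by
  have leibniz : iteratedDeriv (n + 1) g x =
      ∑ i ∈ range (n + 1), n.choose i * iteratedDeriv (i + 1) f x * iteratedDeriv (n - i) g x := by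
    rw [iteratedDeriv_succ', (hfg.iteratedDeriv n).eq_of_nhds,
      iteratedDeriv_mul hf.deriv.contDiffAt hg.contDiffAt]
    simp only [← iteratedDeriv_succ']
  rw [leibniz, sum_div, mul_sum]
  refine sum_congr rfl fun i hi => ?_
  have hin : i ≤ n := Nat.lt_succ_iff.mp (mem_range.mp hi)
  rw [Nat.cast_choose 𝕜 hin, Nat.factorial_succ n, Nat.factorial_succ i]
  have hfac (m : ℕ) : (m ! : 𝕜) ≠ 0 := Nat.cast_ne_zero.mpr (factorial_ne_zero m)
  push_cast
  field_simp [hfac]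

end TaylorCoefficients

open Metric in
/-- The recursion never reads `a 0`, hence only `A - A 0` enters. -/
theorem IsMARec.hasSum_cexp_sub {A : ℂ → ℂ} {a c : ℕ → ℂ} {R : ENNReal}
    (hA : HasFPowerSeriesOnBall A (ofScalars ℂ a) 0 R) (hc : IsMARec a c) {z : ℂ}
    (hz : z ∈ eball 0 R) :
    HasSum (fun k => c k * z ^ k) (Complex.exp (A z - A 0)) := by
  set g : ℂ → ℂ := fun w => Complex.exp (A w - A 0)
  have hg_diff : DifferentiableOn ℂ g (eball 0 R) :=
    (hA.differentiableOn.sub_const _).cexp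
  have hg_deriv : deriv g =ᶠ[𝓝 0] deriv A * g := by
    filter_upwards [hA.analyticAt.eventually_analyticAt] with w hw
    exact ((hw.differentiableAt.hasDerivAt.sub_const (A 0)).cexp).deriv.trans (mul_comm _ _)
  have hg : IsMARec a fun n => iteratedDeriv n g 0 / n ! := by
    refine isMARec_iff.mpr ⟨by simp [g], fun k => ?_⟩
    rw [iteratedDeriv_succ_div_factorial_of_deriv_eq_mul hA.analyticAt
      (hg_diff.analyticAt (isOpen_eball.mem_nhds (mem_eball_self hA.r_pos))) hg_deriv]
    simp only [hA.hasFPowerSeriesAt.iteratedDeriv_div_factorial]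
  rw [hc.unique_s1 hg]
  simpa [div_eq_inv_mul, mul_assoc, mul_comm, mul_left_comm] using
    Complex.hasSum_taylorSeries_on_eball hg_diff hz

lemma one_le_radius_ofScalars {a : ℕ → ℂ} {M : ℝ} (hM : ∀ k : ℕ, 1 ≤ k → ‖a k‖ ≤ M) :
    1 ≤ (ofScalars ℂ a).radius := by
  refine ENNReal.le_of_forall_nnreal_lt fun r hr => ?_
  refine (ofScalars ℂ a).le_radius_of_eventually_le M ?_
  filter_upwards [eventually_ge_atTop 1] with k hk
  rw [ofScalars_norm]
  have hr1 : (r : ℝ) ≤ 1 := by exact_mod_cast hr.le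
  calc ‖a k‖ * (r : ℝ) ^ k ≤ ‖a k‖ * 1 := by gcongr; exact pow_le_one₀ r.2 hr1
    _ ≤ M := by simpa using hM k hk

theorem IsMARec.hasSum_cexp {a c : ℕ → ℂ} {M : ℝ} (hM : ∀ k : ℕ, 1 ≤ k → ‖a k‖ ≤ M)
    (hc : IsMARec a c) {z : ℂ} (hz : ‖z‖ < 1) :
    HasSum (fun k => c k * z ^ k) (Complex.exp (∑' k : ℕ, a (k + 1) * z ^ (k + 1))) := by
  have hR := one_le_radius_ofScalars hM
  have hA := ((ofScalars ℂ a).hasFPowerSeriesOnBall (zero_lt_one.trans_le hR)).mono zero_lt_one hR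
  have hz' : z ∈ Metric.eball (0 : ℂ) 1 := by
    rwa [mem_eball_zero_iff, ← ofReal_norm, ENNReal.ofReal_lt_one]
  have hA0 : (ofScalars ℂ a).sum 0 = a 0 := by
    simpa using (hA.coeff_zero fun _ => 0).symm
  have hsum : HasSum (fun n => a n * z ^ n) ((ofScalars ℂ a).sum z) := by
    simpa only [ofScalars_apply_eq, smul_eq_mul, zero_add] using hA.hasSum hz'
  convert hc.hasSum_cexp_sub hA hz' using 2
  rw [((hasSum_nat_add_iff' 1).mpr hsum).tsum_eq, hA0]
  simp

/-- If `sup_{k ≥ 1} ‖a k‖ ≤ M`, `(c k)` is obtained from `(a k)` by the MA recursion and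
`(b k)` by the AR recursion, then for every `z` with `‖z‖ < 1` the series
`∑_{k ≥ 0} (-(b k)) * z ^ k` converges absolutely, equals `exp (-∑_{k ≥ 1} a k * z ^ k)`,
and `(∑_{k ≥ 0} c k * z ^ k) * (∑_{k ≥ 0} (-(b k)) * z ^ k) = 1`. -/
theorem statement1 (a c b : ℕ → ℂ) (M : ℝ)
    (hM : ∀ k : ℕ, 1 ≤ k → ‖a k‖ ≤ M)
    (hc : IsMARec a c) (hb : IsARRec a b) :
    ∀ z : ℂ, ‖z‖ < 1 →
      Summable (fun k : ℕ => ‖(-(b k)) * z ^ k‖) ∧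
      ∑' k : ℕ, (-(b k)) * z ^ k = Complex.exp (-∑' k : ℕ, a (k + 1) * z ^ (k + 1)) ∧
      (∑' k : ℕ, c k * z ^ k) * (∑' k : ℕ, (-(b k)) * z ^ k) = 1 := by
  intro z hz
  have hMneg : ∀ k : ℕ, 1 ≤ k → ‖(-a) k‖ ≤ M := fun k hk => by simpa using hM k hk
  have hMA := hc.hasSum_cexp hM hz
  have hAR := hb.isMARec_neg.hasSum_cexp hMneg hz
  simp only [Pi.neg_apply, neg_mul (a _), tsum_neg] at hAR
  refine ⟨summable_norm_iff.mpr hAR.summable, hAR.tsum_eq, ?_⟩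
  rw [hMA.tsum_eq, hAR.tsum_eq, ← Complex.exp_add, add_neg_cancel, Complex.exp_zero]
end

section
/- Let a₀, â₀ ∈ ℝ and let (a_k)_{k≥1}, (â_k)_{k≥1} be real sequences with Σ_{k≥1} |a_k| < ∞ and Σ_{k≥1} |â_k| < ∞. Define f(λ) := exp(a₀ + 2 Σ_{k≥1} a_k cos(kλ)) and f̂(λ) := exp(â₀ + 2 Σ_{k≥1} â_k cos(kλ)), and set σ := (2π e^{a₀})^{1/2}, σ̂ := (2π e^{â₀})^{1/2}. Let (c_k) and (ĉ_k) be obtained from (a_k)_{k≥1} and (â_k)_{k≥1} by the MA recursion. Then Σ_{k=0}^∞ (σ c_k − σ̂ ĉ_k)² = ∫₀^{2π} [ f(λ) + f̂(λ) − 2 (f(λ) f̂(λ))^{1/2} cos( Σ_{k≥1} (a_k − â_k) sin(kλ) ) ] dλ, both sides being finite. -/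
open MeasureTheory Filter Topology

/-- The (real) MA recursion: `c 0 = 1` and
`c (k+1) = ∑_{j=0}^{k} (1 - j/(k+1)) * a (k+1-j) * c j`. -/
def IsMARecR (a c : ℕ → ℝ) : Prop :=
  c 0 = 1 ∧
    ∀ k : ℕ, c (k + 1) =
      ∑ j ∈ Finset.range (k + 1), (1 - (j : ℝ) / ((k : ℝ) + 1)) * a (k + 1 - j) * c j

/-- The spectral density with cepstral coefficients `a₀` and `(a_k)_{k ≥ 1}`:
`f(λ) = exp (a₀ + 2 ∑_{k ≥ 1} a_k cos (kλ))`. -/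
noncomputable def expSpec (a0 : ℝ) (a : ℕ → ℝ) (x : ℝ) : ℝ :=
  Real.exp (a0 + 2 * ∑' k : ℕ, a (k + 1) * Real.cos (((k : ℝ) + 1) * x))

/-- `σ = (2π e^{a₀})^{1/2}`. -/
noncomputable def sigmaOf (a0 : ℝ) : ℝ := Real.sqrt (2 * Real.pi * Real.exp a0)

/-! `c` is the coefficient sequence of `C(z) = exp A(z)` with `A(z) = ∑_{k ≥ 1} a_k z^k`: the MA
recursion is `C' = A' C` written coefficientwise. By the triangle inequality the same holds as an
inequality for `|c|` and `|a|`, and Grönwall gives `∑ |c_n| ≤ exp ∑ |a_k|`; Abel's theorem then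
extends `C = exp A` to the unit circle.
With `z = e^{iλ}` and `u = σ c - σ̂ ĉ` this gives `∑ u_n z^n = σ e^{A(z)} - σ̂ e^{Â(z)}`, whose
squared modulus is `2π` times the integrand since `|σ e^{A(e^{iλ})}|² = 2π f(λ)` (the cross term
is the law of cosines). Parseval's identity for the absolutely summable `u` integrates this. -/

open Finset Complex ComplexConjugate

theorem sum_range_sum_antidiagonal_le_mul {x y : ℕ → ℝ} (hx : ∀ i, 0 ≤ x i) (hy : ∀ j, 0 ≤ y j)
    (N : ℕ) :
    ∑ n ∈ range N, ∑ p ∈ antidiagonal n, x p.1 * y p.2 ≤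
      (∑ i ∈ range N, x i) * ∑ j ∈ range N, y j := by
  simp only [Nat.sum_antidiagonal_eq_sum_range_succ (fun i j => x i * y j),
    sum_range_diag_flip N (fun i j => x i * y j), sum_mul_sum]
  gcongr with i _ j
  · exact fun j _ _ => mul_nonneg (hx i) (hy j)
  · exact Nat.sub_le N i

theorem hasDerivAt_sum_range_mul_pow_succ (x : ℕ → ℝ) (N : ℕ) (t : ℝ) :
    HasDerivAt (fun s => ∑ n ∈ range N, x n * s ^ (n + 1))
      (∑ n ∈ range N, ((n : ℝ) + 1) * x n * t ^ n) t := by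
  refine (HasDerivAt.fun_sum fun n _ => (hasDerivAt_pow (n + 1) t).const_mul (x n)).congr_deriv
    (sum_congr rfl fun n _ => ?_)
  rw [add_tsub_cancel_right]
  push_cast
  ring

theorem sum_range_succ_mul_mul_pow_le {b d : ℕ → ℝ} (hb : ∀ k, 0 ≤ b k) (hd : ∀ n, 0 ≤ d n)
    (hrec : ∀ n : ℕ, ((n : ℝ) + 1) * d (n + 1) ≤
      ∑ p ∈ antidiagonal n, ((p.1 : ℝ) + 1) * b (p.1 + 1) * d p.2) (N : ℕ) {t : ℝ} (ht : 0 ≤ t) :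
    ∑ n ∈ range N, ((n : ℝ) + 1) * d (n + 1) * t ^ n ≤
      (∑ k ∈ range N, ((k : ℝ) + 1) * b (k + 1) * t ^ k) * ∑ n ∈ range (N + 1), d n * t ^ n :=
  calc _ ≤ ∑ n ∈ range N, ∑ p ∈ antidiagonal n,
        (((p.1 : ℝ) + 1) * b (p.1 + 1) * t ^ p.1) * (d p.2 * t ^ p.2) := by
        refine sum_le_sum fun n _ => ?_
        calc ((n : ℝ) + 1) * d (n + 1) * t ^ n
            ≤ (∑ p ∈ antidiagonal n, ((p.1 : ℝ) + 1) * b (p.1 + 1) * d p.2) * t ^ n := by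
              gcongr; exact hrec n
          _ = _ := by
              rw [sum_mul]
              refine sum_congr rfl fun p hp => ?_
              rw [← mem_antidiagonal.mp hp, pow_add]; ring
    _ ≤ (∑ k ∈ range N, ((k : ℝ) + 1) * b (k + 1) * t ^ k) * ∑ j ∈ range N, d j * t ^ j :=
        sum_range_sum_antidiagonal_le_mul (x := fun i => ((i : ℝ) + 1) * b (i + 1) * t ^ i)
          (y := fun j => d j * t ^ j) (fun i => by have := hb (i + 1); positivity)
          (fun j => by have := hd j; positivity) N
    _ ≤ _ := by
        refine mul_le_mul_of_nonneg_left ?_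
          (sum_nonneg fun k _ => by have := hb (k + 1); positivity)
        exact sum_le_sum_of_subset_of_nonneg (range_subset_range.2 N.le_succ)
          fun j _ _ => by have := hd j; positivity

/-- Grönwall: `P = ∑ dₙ tⁿ` and `B = ∑ bₖ tᵏ` satisfy `P' ≤ B' P` on `[0, 1]`, so `P e^{-B}`
decreases there. -/
theorem sum_range_succ_le_mul_exp {b d : ℕ → ℝ} (hb : ∀ k, 0 ≤ b k) (hd : ∀ n, 0 ≤ d n)
    (hrec : ∀ n : ℕ, ((n : ℝ) + 1) * d (n + 1) ≤
      ∑ p ∈ antidiagonal n, ((p.1 : ℝ) + 1) * b (p.1 + 1) * d p.2) (N : ℕ) :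
    ∑ n ∈ range (N + 1), d n ≤ d 0 * Real.exp (∑ k ∈ range N, b (k + 1)) := by
  set P : ℝ → ℝ := fun t => d 0 + ∑ n ∈ range N, d (n + 1) * t ^ (n + 1) with hP
  set B : ℝ → ℝ := fun t => ∑ k ∈ range N, b (k + 1) * t ^ (k + 1)
  have hP_eq (t : ℝ) : P t = ∑ n ∈ range (N + 1), d n * t ^ n := by
    rw [hP, sum_range_succ' _ N, pow_zero, mul_one, add_comm]
  have hderiv (t : ℝ) := ((hasDerivAt_sum_range_mul_pow_succ (fun n => d (n + 1)) N t).const_add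
    (d 0)).fun_mul (hasDerivAt_sum_range_mul_pow_succ (fun k => b (k + 1)) N t).fun_neg.exp
  have hanti := antitoneOn_of_hasDerivWithinAt_nonpos (convex_Icc (0 : ℝ) 1)
    (fun t _ => (hderiv t).continuousAt.continuousWithinAt) (fun t _ => (hderiv t).hasDerivWithinAt)
    fun t ht => by
      have := sum_range_succ_mul_mul_pow_le hb hd hrec N (interior_subset ht).1
      rw [← hP_eq] at this
      have := Real.exp_pos (-B t)
      nlinarith
  have h01 := hanti (Set.left_mem_Icc.2 zero_le_one) (Set.right_mem_Icc.2 zero_le_one) zero_le_one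
  simp only [one_pow, mul_one, Real.exp_neg] at h01
  rw [sum_range_succ', add_comm]
  simpa [mul_inv_le_iff₀ (Real.exp_pos _)] using h01

namespace IsMARecR

variable {a c : ℕ → ℝ}

theorem succ_mul (hc : IsMARecR a c) (n : ℕ) :
    ((n : ℝ) + 1) * c (n + 1) = ∑ p ∈ antidiagonal n, ((p.1 : ℝ) + 1) * a (p.1 + 1) * c p.2 := by
  rw [← Nat.sum_antidiagonal_swap]
  simp only [Prod.fst_swap, Prod.snd_swap]
  rw [Nat.sum_antidiagonal_eq_sum_range_succ (fun j i => ((i : ℝ) + 1) * a (i + 1) * c j), hc.2,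
    mul_sum]
  refine sum_congr rfl fun j hj => ?_
  have hjn : j ≤ n := Nat.lt_succ_iff.mp (mem_range.mp hj)
  rw [← Nat.sub_add_comm hjn, Nat.cast_sub hjn]
  field_simp
  ring

theorem abs_succ_mul_le (hc : IsMARecR a c) (n : ℕ) :
    ((n : ℝ) + 1) * |c (n + 1)| ≤
      ∑ p ∈ antidiagonal n, ((p.1 : ℝ) + 1) * |a (p.1 + 1)| * |c p.2| := by
  have h := congrArg abs (hc.succ_mul n)
  rw [abs_mul, abs_of_pos (by positivity : (0 : ℝ) < n + 1)] at h
  rw [h]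
  refine (abs_sum_le_sum_abs _ _).trans_eq (sum_congr rfl fun p _ => ?_)
  rw [abs_mul, abs_mul, abs_of_pos (by positivity : (0 : ℝ) < p.1 + 1)]

theorem summable_abs (ha : Summable fun k => |a (k + 1)|) (hc : IsMARecR a c) :
    Summable fun n => |c n| := by
  refine summable_of_sum_range_le (fun n => abs_nonneg _) (c := Real.exp (∑' k, |a (k + 1)|))
    fun N => ?_
  calc ∑ n ∈ range N, |c n| ≤ ∑ n ∈ range (N + 1), |c n| :=
        sum_le_sum_of_subset_of_nonneg (range_subset_range.2 N.le_succ) fun _ _ _ => abs_nonneg _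
    _ ≤ |c 0| * Real.exp (∑ k ∈ range N, |a (k + 1)|) :=
        sum_range_succ_le_mul_exp (fun _ => abs_nonneg _) (fun _ => abs_nonneg _)
          hc.abs_succ_mul_le N
    _ ≤ Real.exp (∑' k, |a (k + 1)|) := by
        rw [hc.1, abs_one, one_mul, Real.exp_le_exp]
        exact ha.sum_le_tsum _ fun _ _ => abs_nonneg _

end IsMARecR

theorem summable_succ_mul_pow {r : ℝ} (hr0 : 0 ≤ r) (hr1 : r < 1) :
    Summable fun n : ℕ => ((n : ℝ) + 1) * r ^ n := by
  have h := (summable_pow_mul_geometric_of_norm_lt_one 1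
    (by rwa [Real.norm_eq_abs, abs_of_nonneg hr0])).add (summable_geometric_of_lt_one hr0 hr1)
  exact h.congr fun n => by simp only [pow_one]; ring

theorem hasDerivAt_tsum_mul_pow_succ {γ : ℕ → ℂ} {C : ℝ} (hγ : ∀ n, ‖γ n‖ ≤ C) {t : ℝ}
    (ht : |t| < 1) :
    HasDerivAt (fun s : ℝ => ∑' n, γ (n + 1) * (s : ℂ) ^ (n + 1))
      (∑' n : ℕ, ((n : ℂ) + 1) * γ (n + 1) * (t : ℂ) ^ n) t := by
  obtain ⟨r, htr, hr1⟩ := exists_between ht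
  have hr0 : 0 < r := (abs_nonneg t).trans_lt htr
  have hC : 0 ≤ C := (norm_nonneg _).trans (hγ 0)
  refine hasDerivAt_tsum_of_isPreconnected (g := fun n (s : ℝ) => γ (n + 1) * (s : ℂ) ^ (n + 1))
    (g' := fun n (s : ℝ) => ((n : ℂ) + 1) * γ (n + 1) * (s : ℂ) ^ n)
    (summable_succ_mul_pow hr0.le hr1 |>.mul_left C)
    isOpen_Ioo isPreconnected_Ioo (fun n s _ => ?_) (fun n s hs => ?_)
    (Set.mem_Ioo.2 ⟨neg_neg_of_pos hr0, hr0⟩) ?_ (abs_lt.1 htr)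
  · refine ((hasDerivAt_pow (n + 1) (s : ℂ)).const_mul (γ (n + 1))).comp_ofReal.congr_deriv ?_
    rw [add_tsub_cancel_right]
    push_cast
    ring
  · have hsr : |s| ≤ r := abs_le.2 ⟨hs.1.le, hs.2.le⟩
    rw [mul_comm _ (γ _), mul_assoc, norm_mul, norm_mul, norm_pow, Complex.norm_real,
      Real.norm_eq_abs, show ‖(n : ℂ) + 1‖ = (n : ℝ) + 1 by norm_cast]
    exact mul_le_mul (hγ _) (by gcongr) (by positivity) hC
  · simp

theorem summable_norm_mul_pow {β : ℕ → ℂ} {C : ℝ} (hβ : ∀ n, ‖β n‖ ≤ C * ((n : ℝ) + 1))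
    {s : ℝ} (hs : |s| < 1) : Summable fun n => ‖β n * (s : ℂ) ^ n‖ := by
  refine .of_nonneg_of_le (fun _ => norm_nonneg _) (fun n => ?_)
    ((summable_succ_mul_pow (abs_nonneg s) hs).mul_left C)
  rw [norm_mul, norm_pow, Complex.norm_real, Real.norm_eq_abs, ← mul_assoc]
  exact mul_le_mul_of_nonneg_right (hβ n) (by positivity)

/-- The recursion says `G' = A' G` for `G = ∑ γₙ tⁿ` and `A = ∑ αₖ tᵏ`, so `G e^{-A}` is
constant. -/
theorem tsum_mul_pow_eq_cexp {α γ : ℕ → ℂ} {C : ℝ} (hα : ∀ n, ‖α n‖ ≤ C) (hγ : ∀ n, ‖γ n‖ ≤ C)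
    (hγ0 : γ 0 = 1)
    (hrec : ∀ n : ℕ, ((n : ℂ) + 1) * γ (n + 1) =
      ∑ p ∈ antidiagonal n, ((p.1 : ℂ) + 1) * α (p.1 + 1) * γ p.2)
    {t : ℝ} (ht : |t| < 1) :
    ∑' n, γ n * (t : ℂ) ^ n = Complex.exp (∑' n, α (n + 1) * (t : ℂ) ^ (n + 1)) := by
  have hC : 0 ≤ C := (norm_nonneg _).trans (hγ 0)
  have hγ_sum {s : ℝ} (hs : |s| < 1) := summable_norm_mul_pow (C := C) (fun n =>
    (hγ n).trans (le_mul_of_one_le_right hC (le_add_of_nonneg_left n.cast_nonneg))) hs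
  have hα'_sum {s : ℝ} (hs : |s| < 1) :=
    summable_norm_mul_pow (β := fun n => ((n : ℂ) + 1) * α (n + 1)) (C := C) (fun n => by
      rw [norm_mul, mul_comm, show ‖(n : ℂ) + 1‖ = (n : ℝ) + 1 by norm_cast]
      exact mul_le_mul_of_nonneg_right (hα _) (by positivity)) hs
  have hG_eq {s : ℝ} (hs : |s| < 1) :
      ∑' n, γ n * (s : ℂ) ^ n = 1 + ∑' n, γ (n + 1) * (s : ℂ) ^ (n + 1) := by
    rw [(hγ_sum hs).of_norm.tsum_eq_zero_add, hγ0, pow_zero, mul_one]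
  have hG' {s : ℝ} (hs : |s| < 1) :
      ∑' n : ℕ, ((n : ℂ) + 1) * γ (n + 1) * (s : ℂ) ^ n =
        (∑' n : ℕ, ((n : ℂ) + 1) * α (n + 1) * (s : ℂ) ^ n) * ∑' n, γ n * (s : ℂ) ^ n := by
    rw [tsum_mul_tsum_eq_tsum_sum_antidiagonal_of_summable_norm (hα'_sum hs) (hγ_sum hs)]
    refine tsum_congr fun n => ?_
    rw [hrec n, sum_mul]
    refine sum_congr rfl fun p hp => ?_
    rw [← mem_antidiagonal.mp hp, pow_add]
    ring
  have hW (s : ℝ) (hs : s ∈ Set.Ioo (-1 : ℝ) 1) :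
      HasDerivAt (fun s : ℝ => (1 + ∑' n, γ (n + 1) * (s : ℂ) ^ (n + 1)) *
        Complex.exp (-∑' n, α (n + 1) * (s : ℂ) ^ (n + 1))) 0 s := by
    have hs' : |s| < 1 := abs_lt.2 hs
    refine (((hasDerivAt_tsum_mul_pow_succ hγ hs').const_add 1).mul
      (hasDerivAt_tsum_mul_pow_succ hα hs').neg.cexp).congr_deriv ?_
    rw [hG' hs', hG_eq hs']
    ring
  have hconst := isOpen_Ioo.is_const_of_deriv_eq_zero isPreconnected_Ioo
    (fun s hs => (hW s hs).differentiableAt.differentiableWithinAt) (fun s hs => (hW s hs).deriv)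
    (abs_lt.1 ht) (Set.mem_Ioo.2 ⟨neg_one_lt_zero, zero_lt_one⟩)
  simp only [Complex.ofReal_zero, ne_eq, add_eq_zero, one_ne_zero, and_false, not_false_eq_true,
    zero_pow, mul_zero, tsum_zero, add_zero, neg_zero, Complex.exp_zero, mul_one] at hconst
  rw [hG_eq ht, ← mul_inv_eq_one₀ (Complex.exp_ne_zero _), ← Complex.exp_neg, hconst]

theorem tendsto_tsum_mul_pow_nhdsLT_one {f : ℕ → ℂ} (hf : Summable f) :
    Tendsto (fun t : ℝ => ∑' n, f n * (t : ℂ) ^ n) (𝓝[<] 1) (𝓝 (∑' n, f n)) := by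
  have h := Complex.tendsto_tsum_powerSeries_nhdsWithin_lt hf.hasSum.tendsto_sum_nat
  rwa [tendsto_map'_iff] at h

theorem tsum_eq_cexp_tsum {α γ : ℕ → ℂ} (hα : Summable fun n => ‖α n‖)
    (hγ : Summable fun n => ‖γ n‖) (hγ0 : γ 0 = 1)
    (hrec : ∀ n : ℕ, ((n : ℂ) + 1) * γ (n + 1) =
      ∑ p ∈ antidiagonal n, ((p.1 : ℂ) + 1) * α (p.1 + 1) * γ p.2) :
    ∑' n, γ n = Complex.exp (∑' n, α (n + 1)) := by
  have hα_le (n : ℕ) : ‖α n‖ ≤ (∑' n, ‖α n‖) + ∑' n, ‖γ n‖ :=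
    (hα.le_tsum n fun _ _ => norm_nonneg _).trans
      (le_add_of_nonneg_right (tsum_nonneg fun _ => norm_nonneg _))
  have hγ_le (n : ℕ) : ‖γ n‖ ≤ (∑' n, ‖α n‖) + ∑' n, ‖γ n‖ :=
    (hγ.le_tsum n fun _ _ => norm_nonneg _).trans
      (le_add_of_nonneg_left (tsum_nonneg fun _ => norm_nonneg _))
  have hα_shift : Summable fun n => α (n + 1) := ((summable_nat_add_iff 1).2 hα).of_norm
  have hA : Tendsto (fun t : ℝ => ∑' n, α (n + 1) * (t : ℂ) ^ (n + 1)) (𝓝[<] 1)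
      (𝓝 (∑' n, α (n + 1))) := by
    have h := ((Complex.continuous_ofReal.tendsto 1).mono_left nhdsWithin_le_nhds).mul
      (tendsto_tsum_mul_pow_nhdsLT_one hα_shift)
    simp only [Complex.ofReal_one, one_mul, ← tsum_mul_left] at h
    exact h.congr fun t => tsum_congr fun n => by ring
  refine tendsto_nhds_unique ((tendsto_tsum_mul_pow_nhdsLT_one hγ.of_norm).congr' ?_)
    ((Complex.continuous_exp.tendsto _).comp hA)
  filter_upwards [Ioo_mem_nhdsLT (show (-1 : ℝ) < 1 by norm_num)] with t ht
  exact tsum_mul_pow_eq_cexp hα_le hγ_le hγ0 hrec (abs_lt.2 ht)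

theorem IsMARecR.tsum_mul_pow_eq_cexp {a c : ℕ → ℝ} (ha : Summable fun k => |a (k + 1)|)
    (hc : IsMARecR a c) {z : ℂ} (hz : ‖z‖ ≤ 1) :
    ∑' n, (c n : ℂ) * z ^ n = Complex.exp (∑' k, (a (k + 1) : ℂ) * z ^ (k + 1)) := by
  have hnorm_le (x : ℕ → ℝ) (n : ℕ) : ‖(x n : ℂ) * z ^ n‖ ≤ |x n| := by
    rw [norm_mul, norm_pow, Complex.norm_real, Real.norm_eq_abs]
    exact mul_le_of_le_one_right (abs_nonneg _) (pow_le_one₀ (norm_nonneg z) hz)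
  refine tsum_eq_cexp_tsum (α := fun k => (a k : ℂ) * z ^ k) (γ := fun n => (c n : ℂ) * z ^ n)
    (.of_nonneg_of_le (fun _ => norm_nonneg _) (hnorm_le a) ((summable_nat_add_iff 1).1 ha))
    (.of_nonneg_of_le (fun _ => norm_nonneg _) (hnorm_le c) (hc.summable_abs ha))
    (by simp [hc.1]) fun n => ?_
  have h := congrArg (fun x : ℝ => (x : ℂ) * z ^ (n + 1)) (hc.succ_mul n)
  simp only [Complex.ofReal_mul, Complex.ofReal_add, Complex.ofReal_natCast, Complex.ofReal_one,
    Complex.ofReal_sum, sum_mul] at h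
  rw [← mul_assoc, h]
  refine sum_congr rfl fun p hp => ?_
  rw [← mem_antidiagonal.mp hp, add_right_comm, pow_add]
  ring

theorem integral_cexp_pow_mul_conj (n m : ℕ) :
    ∫ x in (0 : ℝ)..2 * Real.pi, exp (x * I) ^ n * conj (exp (x * I) ^ m) =
      if n = m then ((2 * Real.pi : ℝ) : ℂ) else 0 := by
  have h (x : ℝ) : exp (x * I) ^ n * conj (exp (x * I) ^ m) = exp (((n : ℂ) - m) * I * x) := by
    rw [← exp_nat_mul, ← exp_nat_mul, ← exp_conj, ← exp_add]
    congr 1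
    simp only [map_mul, map_natCast, conj_ofReal, conj_I]
    ring
  simp_rw [h]
  split_ifs with hnm
  · simp [hnm]
  · have hc : ((n : ℂ) - m) * I ≠ 0 :=
      mul_ne_zero (sub_ne_zero.2 (Nat.cast_injective.ne hnm)) I_ne_zero
    rw [integral_exp_mul_complex hc, div_eq_zero_iff]
    left
    have h2π : ((n : ℂ) - m) * I * ((2 * Real.pi : ℝ) : ℂ) =
        ((n - m : ℤ) : ℂ) * (2 * Real.pi * I) := by
      push_cast; ring
    rw [h2π, exp_int_mul_two_pi_mul_I]
    simp

theorem norm_mul_cexp_pow (u : ℂ) (x : ℝ) (n : ℕ) : ‖u * exp (x * I) ^ n‖ = ‖u‖ := by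
  rw [norm_mul, norm_pow, norm_exp_ofReal_mul_I, one_pow, mul_one]

theorem summable_mul_cexp_pow {u : ℕ → ℂ} (hu : Summable fun n => ‖u n‖) (x : ℝ) :
    Summable fun n => u n * exp (x * I) ^ n :=
  hu.of_norm_bounded fun n => (norm_mul_cexp_pow _ x n).le

theorem integral_tsum_mul_cexp_pow_mul_conj {u : ℕ → ℂ} (hu : Summable fun n => ‖u n‖) (m : ℕ) :
    ∫ x in (0 : ℝ)..2 * Real.pi, (∑' n, u n * exp (x * I) ^ n) * conj (exp (x * I) ^ m) =
      ((2 * Real.pi : ℝ) : ℂ) * u m := by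
  have hS := intervalIntegral.hasSum_integral_of_dominated_convergence (μ := MeasureTheory.volume)
    (a := 0) (b := 2 * Real.pi)
    (F := fun n (x : ℝ) => u n * (exp (x * I) ^ n * conj (exp (x * I) ^ m)))
    (f := fun x : ℝ => (∑' n, u n * exp (x * I) ^ n) * conj (exp (x * I) ^ m))
    (fun n _ => ‖u n‖) (fun n => (by fun_prop : Continuous _).aestronglyMeasurable)
    (fun n => .of_forall fun x _ => by simp [norm_exp_ofReal_mul_I])
    (.of_forall fun _ _ => hu) intervalIntegrable_const
    (.of_forall fun x _ => by
      simpa only [mul_assoc] using (summable_mul_cexp_pow hu x).hasSum.mul_right _)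
  simp only [intervalIntegral.integral_const_mul, integral_cexp_pow_mul_conj, mul_ite,
    mul_zero] at hS
  exact hS.unique ((hasSum_ite_eq m _).congr_fun fun n => by split_ifs <;> simp_all [mul_comm])

theorem hasSum_two_pi_mul_norm_sq {u : ℕ → ℂ} (hu : Summable fun n => ‖u n‖) :
    HasSum (fun n => 2 * Real.pi * ‖u n‖ ^ 2)
      (∫ x in (0 : ℝ)..2 * Real.pi, ‖∑' n, u n * exp (x * I) ^ n‖ ^ 2) := by
  have hS_le (x : ℝ) : ‖∑' n, u n * exp (x * I) ^ n‖ ≤ ∑' n, ‖u n‖ :=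
    (norm_tsum_le_tsum_norm (hu.congr fun n => (norm_mul_cexp_pow _ x n).symm)).trans_eq
      (tsum_congr fun n => norm_mul_cexp_pow _ x n)
  have hS_cont : Continuous fun x : ℝ => ∑' n, u n * exp (x * I) ^ n :=
    continuous_tsum (fun n => by fun_prop) hu fun n x => (norm_mul_cexp_pow _ x n).le
  have hexpand (x : ℝ) : HasSum
      (fun m => conj (u m) * ((∑' n, u n * exp (x * I) ^ n) * conj (exp (x * I) ^ m)))
      ((∑' n, u n * exp (x * I) ^ n) * conj (∑' n, u n * exp (x * I) ^ n)) :=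
    ((hasSum_conj'.2 (summable_mul_cexp_pow hu x).hasSum).mul_left _).congr_fun fun m => by
      rw [map_mul]; ring
  -- integrate `‖S‖² = S * conj S` termwise against the Fourier coefficients of `S`
  have h := intervalIntegral.hasSum_integral_of_dominated_convergence (μ := MeasureTheory.volume)
    (a := 0) (b := 2 * Real.pi) (fun m _ => ‖u m‖ * ∑' n, ‖u n‖)
    (fun m => (by fun_prop : Continuous _).aestronglyMeasurable)
    (fun m => .of_forall fun x _ => by
      simpa [norm_exp_ofReal_mul_I] using mul_le_mul_of_nonneg_left (hS_le x) (norm_nonneg (u m)))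
    (.of_forall fun _ _ => hu.mul_right _) intervalIntegrable_const
    (.of_forall fun x _ => hexpand x)
  simp only [intervalIntegral.integral_const_mul, integral_tsum_mul_cexp_pow_mul_conj hu,
    mul_conj', ← ofReal_pow, intervalIntegral.integral_ofReal] at h
  refine hasSum_ofReal.1 (h.congr_fun fun n => ?_)
  rw [mul_left_comm, conj_mul']
  push_cast
  ring

theorem summable_mul_cexp_pow_succ {b : ℕ → ℝ} (hb : Summable fun k => |b (k + 1)|) (x : ℝ) :
    Summable fun k => (b (k + 1) : ℂ) * exp (x * I) ^ (k + 1) :=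
  hb.of_norm_bounded fun k => by simp [norm_exp_ofReal_mul_I]

theorem cexp_pow_succ (x : ℝ) (k : ℕ) :
    exp (x * I) ^ (k + 1) = exp (((((k : ℝ) + 1) * x : ℝ) : ℂ) * I) := by
  rw [← exp_nat_mul]
  push_cast
  ring_nf

theorem re_tsum_mul_cexp_pow_succ {b : ℕ → ℝ} (hb : Summable fun k => |b (k + 1)|) (x : ℝ) :
    (∑' k, (b (k + 1) : ℂ) * exp (x * I) ^ (k + 1)).re =
      ∑' k : ℕ, b (k + 1) * Real.cos (((k : ℝ) + 1) * x) := by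
  rw [re_tsum (summable_mul_cexp_pow_succ hb x)]
  simp only [cexp_pow_succ, re_ofReal_mul, exp_ofReal_mul_I_re]

theorem im_tsum_mul_cexp_pow_succ {b : ℕ → ℝ} (hb : Summable fun k => |b (k + 1)|) (x : ℝ) :
    (∑' k, (b (k + 1) : ℂ) * exp (x * I) ^ (k + 1)).im =
      ∑' k : ℕ, b (k + 1) * Real.sin (((k : ℝ) + 1) * x) := by
  rw [im_tsum (summable_mul_cexp_pow_succ hb x)]
  simp only [cexp_pow_succ, im_ofReal_mul, exp_ofReal_mul_I_im]

theorem norm_sub_sq_ofReal_mul_cexp {r s : ℝ} (hr : 0 ≤ r) (hs : 0 ≤ s) (A B : ℂ) :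
    ‖r * exp A - s * exp B‖ ^ 2 = ‖r * exp A‖ ^ 2 + ‖s * exp B‖ ^ 2 -
      2 * (‖r * exp A‖ * ‖s * exp B‖) * Real.cos (A.im - B.im) := by
  have hre : ((r * exp A) * conj (s * exp B)).re =
      ‖r * exp A‖ * ‖s * exp B‖ * Real.cos (A.im - B.im) := by
    rw [map_mul, conj_ofReal, ← exp_conj, mul_mul_mul_comm, ← exp_add, ← ofReal_mul,
      re_ofReal_mul, exp_re]
    simp only [norm_mul, norm_real, Real.norm_eq_abs, abs_of_nonneg hr, abs_of_nonneg hs,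
      norm_exp, add_re, add_im, conj_re, conj_im, Real.exp_add]
    ring_nf
  rw [mul_assoc (2 : ℝ), ← hre, ← normSq_eq_norm_sq, ← normSq_eq_norm_sq, ← normSq_eq_norm_sq,
    normSq_sub]

theorem expSpec_nonneg (a0 : ℝ) (a : ℕ → ℝ) (x : ℝ) : 0 ≤ expSpec a0 a x := (Real.exp_pos _).le

theorem sigmaOf_nonneg (a0 : ℝ) : 0 ≤ sigmaOf a0 := Real.sqrt_nonneg _

theorem sigmaOf_sq (a0 : ℝ) : sigmaOf a0 ^ 2 = 2 * Real.pi * Real.exp a0 :=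
  Real.sq_sqrt (by positivity)

theorem norm_sigmaOf_mul_cexp (a0 : ℝ) {a : ℕ → ℝ} (ha : Summable fun k => |a (k + 1)|)
    (x : ℝ) :
    ‖(sigmaOf a0 : ℂ) * exp (∑' k, (a (k + 1) : ℂ) * exp (x * I) ^ (k + 1))‖ =
      Real.sqrt (2 * Real.pi * expSpec a0 a x) := by
  rw [← Real.sqrt_sq (norm_nonneg _)]
  congr 1
  rw [norm_mul, norm_exp, re_tsum_mul_cexp_pow_succ ha, norm_real, Real.norm_eq_abs, mul_pow,
    sq_abs, sigmaOf_sq, expSpec, ← Real.exp_nat_mul, Real.exp_add]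
  push_cast
  ring

theorem norm_tsum_sub_sq_eq {a0 ahat0 : ℝ} {a ahat c chat : ℕ → ℝ}
    (ha : Summable fun k => |a (k + 1)|) (hahat : Summable fun k => |ahat (k + 1)|)
    (hc : IsMARecR a c) (hchat : IsMARecR ahat chat) (x : ℝ) :
    ‖∑' n, ((sigmaOf a0 * c n - sigmaOf ahat0 * chat n : ℝ) : ℂ) * exp (x * I) ^ n‖ ^ 2 =
      2 * Real.pi * (expSpec a0 a x + expSpec ahat0 ahat x -
        2 * Real.sqrt (expSpec a0 a x * expSpec ahat0 ahat x) *
          Real.cos (∑' k : ℕ, (a (k + 1) - ahat (k + 1)) * Real.sin (((k : ℝ) + 1) * x))) := by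
  have hz : ‖exp (x * I)‖ ≤ 1 := (norm_exp_ofReal_mul_I x).le
  have hsum {a c : ℕ → ℝ} (ha : Summable fun k => |a (k + 1)|) (hc : IsMARecR a c) :=
    summable_mul_cexp_pow (u := fun n => (c n : ℂ)) (by simpa using hc.summable_abs ha) x
  have h2πf (a0 : ℝ) (a : ℕ → ℝ) : 0 ≤ 2 * Real.pi * expSpec a0 a x :=
    mul_nonneg Real.two_pi_pos.le (expSpec_nonneg a0 a x)
  have hprod : Real.sqrt (2 * Real.pi * expSpec a0 a x * (2 * Real.pi * expSpec ahat0 ahat x)) =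
      2 * Real.pi * Real.sqrt (expSpec a0 a x * expSpec ahat0 ahat x) := by
    rw [show 2 * Real.pi * expSpec a0 a x * (2 * Real.pi * expSpec ahat0 ahat x) =
      (2 * Real.pi) ^ 2 * (expSpec a0 a x * expSpec ahat0 ahat x) by ring,
      Real.sqrt_mul (by positivity), Real.sqrt_sq Real.two_pi_pos.le]
  have hsin {b : ℕ → ℝ} (hb : Summable fun k => |b (k + 1)|) :
      Summable fun k : ℕ => b (k + 1) * Real.sin (((k : ℝ) + 1) * x) :=
    hb.of_norm_bounded fun k => by
      rw [Real.norm_eq_abs, abs_mul]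
      exact mul_le_of_le_one_right (abs_nonneg _) (Real.abs_sin_le_one _)
  have hsplit : ∑' n, ((sigmaOf a0 * c n - sigmaOf ahat0 * chat n : ℝ) : ℂ) * exp (x * I) ^ n =
      sigmaOf a0 * ∑' n, (c n : ℂ) * exp (x * I) ^ n -
        sigmaOf ahat0 * ∑' n, (chat n : ℂ) * exp (x * I) ^ n := by
    simp only [ofReal_sub, ofReal_mul, sub_mul, mul_assoc]
    rw [((hsum ha hc).mul_left _).tsum_sub ((hsum hahat hchat).mul_left _), tsum_mul_left,
      tsum_mul_left]
  have hcos : ∑' k : ℕ, (a (k + 1) - ahat (k + 1)) * Real.sin (((k : ℝ) + 1) * x) =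
      (∑' k, (a (k + 1) : ℂ) * exp (x * I) ^ (k + 1)).im -
        (∑' k, (ahat (k + 1) : ℂ) * exp (x * I) ^ (k + 1)).im := by
    rw [im_tsum_mul_cexp_pow_succ ha, im_tsum_mul_cexp_pow_succ hahat, ← (hsin ha).tsum_sub
      (hsin hahat)]
    simp only [sub_mul]
  rw [hsplit, hc.tsum_mul_pow_eq_cexp ha hz, hchat.tsum_mul_pow_eq_cexp hahat hz,
    norm_sub_sq_ofReal_mul_cexp (sigmaOf_nonneg _) (sigmaOf_nonneg _),
    norm_sigmaOf_mul_cexp a0 ha, norm_sigmaOf_mul_cexp ahat0 hahat, Real.sq_sqrt (h2πf a0 a), Real.sq_sqrt (h2πf ahat0 ahat),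
    ← Real.sqrt_mul (h2πf a0 a), hprod, hcos]
  ring

/-- For absolutely summable cepstral coefficients `(a_k)`, `(â_k)` with associated spectral
densities `f, f̂`, innovation scales `σ, σ̂` and Wold coefficients `(c_k), (ĉ_k)` obtained by
the MA recursion,
`∑_{k=0}^∞ (σ c_k - σ̂ ĉ_k)²
   = ∫₀^{2π} [f(λ) + f̂(λ) - 2 √(f(λ) f̂(λ)) cos (∑_{k ≥ 1} (a_k - â_k) sin (kλ))] dλ`,
both sides being finite. -/
theorem statement6 (a0 ahat0 : ℝ) (a ahat : ℕ → ℝ)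
    (ha : Summable fun k : ℕ => |a (k + 1)|)
    (hahat : Summable fun k : ℕ => |ahat (k + 1)|)
    (c chat : ℕ → ℝ) (hc : IsMARecR a c) (hchat : IsMARecR ahat chat) :
    Summable (fun k : ℕ => (sigmaOf a0 * c k - sigmaOf ahat0 * chat k) ^ 2) ∧
    ∑' k : ℕ, (sigmaOf a0 * c k - sigmaOf ahat0 * chat k) ^ 2 =
      ∫ x in (0:ℝ)..(2 * Real.pi),
        (expSpec a0 a x + expSpec ahat0 ahat x -
          2 * Real.sqrt (expSpec a0 a x * expSpec ahat0 ahat x) *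
            Real.cos (∑' k : ℕ, (a (k + 1) - ahat (k + 1)) * Real.sin (((k : ℝ) + 1) * x))) := by
  have hu : Summable fun n => ‖((sigmaOf a0 * c n - sigmaOf ahat0 * chat n : ℝ) : ℂ)‖ := by
    simpa only [Complex.norm_real, Real.norm_eq_abs] using summable_abs_iff.2
      (((summable_abs_iff.1 (hc.summable_abs ha)).mul_left _).sub
        ((summable_abs_iff.1 (hchat.summable_abs hahat)).mul_left _))
  have h := (hasSum_two_pi_mul_norm_sq hu).mul_left (2 * Real.pi)⁻¹
  simp only [norm_tsum_sub_sq_eq ha hahat hc hchat, intervalIntegral.integral_const_mul,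
    Complex.norm_real, Real.norm_eq_abs, sq_abs, ← mul_assoc,
    inv_mul_cancel₀ Real.two_pi_pos.ne', one_mul] at h
  exact ⟨h.summable, h.tsum_eq⟩
end

section
/- Let (a_k)_{k≥1} be complex numbers with Σ_{k=1}^∞ |a_k| < ∞, and let (c_k)_{k≥0} be defined from (a_k) by the MA recursion. Then Σ_{k=0}^∞ |c_k| ≤ exp( Σ_{k=1}^∞ |a_k| ). -/
open Filter Topology

/-!
Multiplying the recursion by `k + 1` gives `(k + 1) c_{k+1} = ∑_{i+j=k} c_j (i + 1) a_{i+1}`,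
i.e. `C' = A' C` for the generating functions, so `u_k = ‖c_k‖` satisfies the same relation
with `≤` and `‖a_k‖`. For the truncations `P = ∑_{k ≤ N} u_k X^k` and `B = ∑_{1 ≤ k ≤ N} ‖a_k‖ X^k`
this gives `P' ≤ B' P` coefficientwise, hence on `[0, 1]`; Grönwall's argument (`P e^{-B}`
is antitone) then yields `P(1) ≤ P(0) e^{B(1) - B(0)} = e^{B(1)}`.
-/

open Finset Polynomial

open Set Real in
theorem le_mul_exp_sub_of_hasDerivAt_le_mul {f f' g g' : ℝ → ℝ} {a b : ℝ} (hab : a ≤ b)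
    (hf : ∀ x ∈ Icc a b, HasDerivAt f (f' x) x) (hg : ∀ x ∈ Icc a b, HasDerivAt g (g' x) x)
    (hle : ∀ x ∈ Ioo a b, f' x ≤ g' x * f x) :
    f b ≤ f a * exp (g b - g a) := by
  set h : ℝ → ℝ := fun x => f x * exp (-g x)
  have hh : ∀ x ∈ Icc a b, HasDerivAt h ((f' x - g' x * f x) * exp (-g x)) x := fun x hx =>
    ((hf x hx).mul (hg x hx).fun_neg.exp).congr_deriv (by ring)
  have hanti : AntitoneOn h (Icc a b) := by
    refine antitoneOn_of_hasDerivWithinAt_nonpos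
      (f' := fun x => (f' x - g' x * f x) * exp (-g x)) (convex_Icc a b)
      (fun x hx => (hh x hx).continuousAt.continuousWithinAt) (fun x hx => ?_) fun x hx => ?_
    · rw [interior_Icc] at hx
      exact (hh x (Ioo_subset_Icc_self hx)).hasDerivWithinAt
    · rw [interior_Icc] at hx
      exact mul_nonpos_of_nonpos_of_nonneg (sub_nonpos.2 (hle x hx)) (exp_pos _).le
  have hba : f b * exp (-g b) ≤ f a * exp (-g a) :=
    hanti (left_mem_Icc.2 hab) (right_mem_Icc.2 hab) hab
  calc f b = f b * exp (-g b) * exp (g b) := by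
        rw [mul_assoc, ← exp_add, neg_add_cancel, exp_zero, mul_one]
    _ ≤ f a * exp (-g a) * exp (g b) := by gcongr
    _ = f a * exp (g b - g a) := by rw [mul_assoc, ← exp_add, neg_add_eq_sub]

theorem Polynomial.eval_le_eval_of_coeff_le {R : Type*} [CommRing R] [PartialOrder R]
    [IsOrderedRing R] {p q : R[X]} (hpq : ∀ n, p.coeff n ≤ q.coeff n)
    {x : R} (hx : 0 ≤ x) : p.eval x ≤ q.eval x := by
  rw [← sub_nonneg, ← eval_sub, eval_eq_sum]
  exact sum_nonneg fun n _ => mul_nonneg (by simpa using hpq n) (pow_nonneg hx n)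

section
variable {u β : ℕ → ℝ}

theorem coeff_derivative_trunc_le (hu : ∀ k, 0 ≤ u k) (hβ : ∀ k, 0 ≤ β k)
    (hrec : ∀ k : ℕ, ((k : ℝ) + 1) * u (k + 1) ≤
      ∑ p ∈ antidiagonal k, u p.1 * ((p.2 + 1) * β p.2))
    (N n : ℕ) :
    (derivative (PowerSeries.trunc (N + 1) (PowerSeries.mk u))).coeff n ≤
      (PowerSeries.trunc (N + 1) (PowerSeries.mk u) *
        derivative (X * PowerSeries.trunc N (PowerSeries.mk β))).coeff n := by
  rw [coeff_mul]
  simp only [coeff_derivative, coeff_X_mul, PowerSeries.coeff_trunc, PowerSeries.coeff_mk]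
  by_cases hn : n < N
  · rw [if_pos (by omega), mul_comm]
    refine (hrec n).trans_eq (sum_congr rfl fun p hp => ?_)
    have := mem_antidiagonal.1 hp
    rw [if_pos (by omega), if_pos (by omega)]
    ring
  · rw [if_neg (by omega), zero_mul]
    refine sum_nonneg fun p _ => mul_nonneg ?_ (mul_nonneg ?_ (by positivity))
    · split_ifs <;> simp [hu]
    · split_ifs <;> simp [hβ]

theorem PowerSeries.eval_one_trunc_mk {R : Type*} [CommSemiring R] (N : ℕ) (f : ℕ → R) :
    (PowerSeries.trunc N (PowerSeries.mk f)).eval 1 = ∑ i ∈ range N, f i := by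
  simp [eval, PowerSeries.eval₂_trunc_eq_sum_range]

theorem sum_range_le_mul_exp_of_succ_mul_le (hu : ∀ k, 0 ≤ u k) (hβ : ∀ k, 0 ≤ β k)
    (hrec : ∀ k : ℕ, ((k : ℝ) + 1) * u (k + 1) ≤
      ∑ p ∈ antidiagonal k, u p.1 * ((p.2 + 1) * β p.2))
    (N : ℕ) :
    ∑ k ∈ range (N + 1), u k ≤ u 0 * Real.exp (∑ i ∈ range N, β i) := by
  set P := PowerSeries.trunc (N + 1) (PowerSeries.mk u)
  set B := X * PowerSeries.trunc N (PowerSeries.mk β)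
  have hPB : ∀ x ∈ Set.Ioo (0 : ℝ) 1, (derivative P).eval x ≤ (derivative B).eval x * P.eval x :=
    fun x hx => by
      rw [mul_comm, ← eval_mul]
      exact eval_le_eval_of_coeff_le (coeff_derivative_trunc_le hu hβ hrec N) hx.1.le
  have := le_mul_exp_sub_of_hasDerivAt_le_mul zero_le_one (fun x _ => P.hasDerivAt x)
    (fun x _ => B.hasDerivAt x) hPB
  simpa [P, B, PowerSeries.eval_one_trunc_mk, ← coeff_zero_eq_eval_zero, PowerSeries.coeff_trunc]
    using this
end

theorem IsMARec.succ_mul_eq {a c : ℕ → ℂ} (hrec : IsMARec a c) (k : ℕ) :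
    ((k : ℂ) + 1) * c (k + 1) = ∑ p ∈ antidiagonal k, c p.1 * ((p.2 + 1) * a (p.2 + 1)) := by
  rw [hrec.2 k, mul_sum, Nat.sum_antidiagonal_eq_sum_range_succ_mk]
  refine sum_congr rfl fun j hj => ?_
  have hjk : j ≤ k := mem_range_succ_iff.1 hj
  rw [show k + 1 - j = k - j + 1 by omega, Nat.cast_sub hjk]
  field_simp
  ring

theorem IsMARec.succ_mul_norm_le {a c : ℕ → ℂ} (hrec : IsMARec a c) (k : ℕ) :
    ((k : ℝ) + 1) * ‖c (k + 1)‖ ≤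
      ∑ p ∈ antidiagonal k, ‖c p.1‖ * ((p.2 + 1) * ‖a (p.2 + 1)‖) := by
  have h := congrArg norm (hrec.succ_mul_eq k)
  rw [norm_mul, ← Nat.cast_succ, Complex.norm_natCast, Nat.cast_succ] at h
  refine h.le.trans ((norm_sum_le _ _).trans_eq (sum_congr rfl fun p _ => ?_))
  rw [norm_mul, norm_mul, ← Nat.cast_succ, Complex.norm_natCast, Nat.cast_succ]

/-- If `∑_{k=1}^∞ |a_k| < ∞` and `(c_k)` is obtained from `(a_k)` by the MA recursion, then
`∑_{k=0}^∞ |c_k| ≤ exp (∑_{k=1}^∞ |a_k|)`. -/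
theorem statement12 (a c : ℕ → ℂ)
    (ha : Summable fun k : ℕ => ‖a (k + 1)‖)
    (hrec : IsMARec a c) :
    ∑' k : ℕ, ENNReal.ofReal ‖c k‖ ≤
      ENNReal.ofReal (Real.exp (∑' k : ℕ, ‖a (k + 1)‖)) := by
  have hpartial (N : ℕ) : ∑ k ∈ range (N + 1), ‖c k‖ ≤ Real.exp (∑' k, ‖a (k + 1)‖) :=
    calc ∑ k ∈ range (N + 1), ‖c k‖
        ≤ ‖c 0‖ * Real.exp (∑ i ∈ range N, ‖a (i + 1)‖) :=
          sum_range_le_mul_exp_of_succ_mul_le (fun _ => norm_nonneg _) (fun _ => norm_nonneg _)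
            hrec.succ_mul_norm_le N
      _ ≤ Real.exp (∑' k, ‖a (k + 1)‖) := by
          rw [hrec.1, norm_one, one_mul, Real.exp_le_exp]
          exact ha.sum_le_tsum _ fun _ _ => norm_nonneg _
  rw [ENNReal.tsum_eq_iSup_nat' (tendsto_add_atTop_nat 1)]
  refine iSup_le fun N => ?_
  rw [← ENNReal.ofReal_sum_of_nonneg fun _ _ => norm_nonneg _]
  exact ENNReal.ofReal_le_ofReal (hpartial N)
end

section
/- Let H be a real Hilbert space, (e_t)_{t∈ℤ} an orthonormal family in H, and θ > 1 a real number. Set X_t := e_t + θ e_{t−1} and ε_t := e_t + (1 − θ²) Σ_{j=1}^∞ (−θ)^{−j} e_{t−j} (the series converging in H). Then for each t ∈ ℤ the series Σ_{j=0}^∞ (−θ)^{−j} X_{t−j} converges in H and Σ_{j=0}^∞ (−θ)^{−j} X_{t−j} = ε_t; equivalently, X_t = − Σ_{j=1}^∞ (−θ)^{−j} X_{t−j} + ε_t. -/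
open scoped RealInnerProductSpace

noncomputable def woldInnov {H : Type*} [NormedAddCommGroup H] [InnerProductSpace ℝ H]
    (e : ℤ → H) (θ : ℝ) (t : ℤ) : H :=
  e t + (1 - θ ^ 2) • ∑' j : ℕ, ((-θ)⁻¹) ^ (j + 1) • e (t - (j + 1))

noncomputable def ma1 {H : Type*} [NormedAddCommGroup H] [InnerProductSpace ℝ H]
    (e : ℤ → H) (θ : ℝ) (t : ℤ) : H :=
  e t + θ • e (t - 1)

/-- For an orthonormal family `(e_t)_{t ∈ ℤ}` in a real Hilbert space and `θ > 1`, with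
`X_t = e_t + θ e_{t-1}` and Wold innovations `ε_t`, the series
`∑_{j=0}^∞ (-θ)^{-j} X_{t-j}` converges and equals `ε_t`; equivalently
`X_t = -∑_{j=1}^∞ (-θ)^{-j} X_{t-j} + ε_t`. -/
theorem statement18 {H : Type*} [NormedAddCommGroup H] [InnerProductSpace ℝ H]
    [CompleteSpace H] (e : ℤ → H) (he : Orthonormal ℝ e) (θ : ℝ) (hθ : 1 < θ) :
    (∀ t : ℤ, Summable fun j : ℕ => ((-θ)⁻¹) ^ j • ma1 e θ (t - j)) ∧
    (∀ t : ℤ, ∑' j : ℕ, ((-θ)⁻¹) ^ j • ma1 e θ (t - j) = woldInnov e θ t) ∧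
    (∀ t : ℤ, ma1 e θ t =
      -(∑' j : ℕ, ((-θ)⁻¹) ^ (j + 1) • ma1 e θ (t - (j + 1))) + woldInnov e θ t) := by
  have hθ0 : (0:ℝ) < θ := lt_trans one_pos hθ
  set r : ℝ := (-θ)⁻¹ with hrdef
  have hrabs : |r| < 1 := by
    rw [hrdef, abs_inv, abs_neg, abs_of_pos hθ0]
    rw [inv_lt_one_iff₀]
    right; exact hθ
  have hnorm : ∀ s, ‖e s‖ = 1 := fun s => he.1 s
  -- general summability lemma
  have key : ∀ (g : ℕ → ℝ) (f : ℕ → ℤ), Summable (fun j => |g j|) →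
      Summable (fun j : ℕ => g j • e (f j)) := by
    intro g f hg
    apply Summable.of_norm
    have h : ∀ j, ‖g j • e (f j)‖ = |g j| := by
      intro j; rw [norm_smul, hnorm, mul_one, Real.norm_eq_abs]
    simpa [h] using hg
  have geo : Summable (fun j : ℕ => |r| ^ j) :=
    summable_geometric_of_lt_one (abs_nonneg r) hrabs
  have habs : ∀ (c : ℝ) (m : ℕ), Summable (fun j : ℕ => |c * r ^ (j + m)|) := by
    intro c m
    have : ∀ j : ℕ, |c * r ^ (j + m)| = (|c| * |r| ^ m) * |r| ^ j := by
      intro j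
      rw [abs_mul, abs_pow, pow_add]; ring
    simpa [this] using geo.mul_left (|c| * |r| ^ m)
  -- summability facts
  have S1 : ∀ t : ℤ, Summable (fun j : ℕ => (r ^ j) • e (t - j)) :=
    fun t => key _ _ (by simpa using habs 1 0)
  have S2 : ∀ t : ℤ, Summable (fun j : ℕ => (θ * r ^ j) • e (t - (j + 1))) :=
    fun t => key _ _ (by simpa using habs θ 0)
  have S3 : ∀ t : ℤ, Summable (fun j : ℕ => (r ^ (j + 1)) • e (t - (j + 1))) :=
    fun t => key _ _ (by simpa using habs 1 1)
  have hXfun : ∀ t : ℤ, (fun j : ℕ => r ^ j • ma1 e θ (t - j)) =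
      fun j : ℕ => (r ^ j) • e (t - j) + (θ * r ^ j) • e (t - (j + 1)) := by
    intro t; funext j
    have : t - (j:ℤ) - 1 = t - ((j:ℤ) + 1) := by ring
    rw [ma1, smul_add, smul_smul, mul_comm, this]
  have hsum : ∀ t : ℤ, Summable (fun j : ℕ => r ^ j • ma1 e θ (t - j)) := by
    intro t; rw [hXfun t]; exact (S1 t).add (S2 t)
  have hco : ∀ j : ℕ, r ^ (j + 1) + θ * r ^ j = (1 - θ ^ 2) * r ^ (j + 1) := by
    intro j
    have hθne : θ ≠ 0 := ne_of_gt hθ0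
    have h1 : r + θ = (1 - θ ^ 2) * r := by
      have hne : -θ ≠ 0 := neg_ne_zero.mpr hθne
      rw [hrdef]
      field_simp
      ring
    calc r ^ (j + 1) + θ * r ^ j = r ^ j * (r + θ) := by rw [pow_succ]; ring
      _ = r ^ j * ((1 - θ ^ 2) * r) := by rw [h1]
      _ = (1 - θ ^ 2) * r ^ (j + 1) := by rw [pow_succ]; ring
  have hts : ∀ t : ℤ, ∑' j : ℕ, r ^ j • ma1 e θ (t - j) = woldInnov e θ t := by
    intro t
    rw [hXfun t, Summable.tsum_add (S1 t) (S2 t), Summable.tsum_eq_zero_add (S1 t)]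
    simp only [pow_zero, one_smul, Nat.cast_zero, sub_zero, Nat.cast_add, Nat.cast_one]
    rw [add_assoc, ← Summable.tsum_add (S3 t) (S2 t)]
    have hcomb : (fun j : ℕ => (r ^ (j + 1)) • e (t - ((j:ℤ) + 1)) + (θ * r ^ j) • e (t - ((j:ℤ) + 1)))
        = fun j : ℕ => (1 - θ ^ 2) • ((r ^ (j + 1)) • e (t - ((j:ℤ) + 1))) := by
      funext j
      rw [← add_smul, hco j, smul_smul]
    rw [hcomb, Summable.tsum_const_smul _ (S3 t), woldInnov]
  refine ⟨hsum, hts, ?_⟩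
  intro t
  have h := hts t
  rw [Summable.tsum_eq_zero_add (hsum t)] at h
  simp only [pow_zero, one_smul, Nat.cast_zero, sub_zero, Nat.cast_add, Nat.cast_one] at h
  rw [neg_add_eq_sub, eq_sub_iff_add_eq]
  exact h
end
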